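/- arXiv:1608.03033 — 2 statements merged into one kernel-verified Lean document; each statement's English description precedes it below -/
import Mathlib

section
/- Let w: ℝ → ℝ be continuously differentiable and satisfy (σ²/2)w'(z) + π(w(z)) − h(z) = γ for all z, where π is strictly decreasing with π(w) → +∞ as w → −∞ and π(w) → −∞ as w → +∞, h(z) → +∞ as z → +∞, and w'(z)/h(z) → 0 as z → +∞. Then w(z) → −∞ as z → +∞. -/
/-! The ODE gives `π (w z) = γ + h z - (σ²/2) w' z`, and `w' = o(h)` makes the right-hand side
asymptotic to `h z`, hence tend to `+∞`; since `π` is decreasing, `w` must tend to `-∞`. -/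

open Filter Topology Asymptotics

theorem Antitone.tendsto_atBot_of_tendsto_comp_atTop {α β γ : Type*} [LinearOrder α] [Preorder β]
    [NoMaxOrder β] {π : α → β} (hπ : Antitone π) {l : Filter γ} {f : γ → α}
    (hf : Tendsto (π ∘ f) l atTop) : Tendsto f l atBot :=
  tendsto_atBot.2 fun b =>
    (hf.eventually_gt_atTop (π b)).mono fun _ hz => (hπ.reflect_lt hz).le

theorem Filter.Tendsto.atTop_add_const_mul_of_div_tendsto_zero {α : Type*} {l : Filter α}
    {f g : α → ℝ} (c : ℝ) (hg : Tendsto g l atTop) (hfg : Tendsto (fun x => f x / g x) l (𝓝 0)) :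
    Tendsto (fun x => g x + c * f x) l atTop := by
  have hf : f =o[l] g := (isLittleO_iff_tendsto' <|
    (hg.eventually_gt_atTop 0).mono fun _ hx h0 => absurd h0 hx.ne').2 hfg
  exact ((hf.const_mul_left c).add_isEquivalent IsEquivalent.refl).symm.tendsto_atTop hg
    |>.congr fun _ => add_comm _ _

theorem stmt_10_general (σ γ : ℝ)
    (h : ℝ → ℝ)
    (hh : Filter.Tendsto h Filter.atTop Filter.atTop)
    (π : ℝ → ℝ) (hπanti : StrictAnti π)
    (w w' : ℝ → ℝ)
    (hode : ∀ z : ℝ, σ^2 / 2 * w' z + π (w z) - h z = γ)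
    (hratio : Filter.Tendsto (fun z => w' z / h z) Filter.atTop (nhds 0)) :
    Filter.Tendsto w Filter.atTop Filter.atBot := by
  have hπw : Tendsto (π ∘ w) atTop atTop :=
    (tendsto_const_nhds (x := γ)).add_atTop
      (hh.atTop_add_const_mul_of_div_tendsto_zero (-(σ ^ 2 / 2)) hratio)
      |>.congr fun z => by linarith [hode z, show (π ∘ w) z = π (w z) from rfl]
  exact hπanti.antitone.tendsto_atBot_of_tendsto_comp_atTop hπw

/-- Let w ∈ C¹(ℝ) satisfy (σ²/2)w'(z) + π(w(z)) − h(z) = γ with π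
continuous, strictly decreasing, π → +∞ at −∞ and π → −∞ at +∞, h → +∞ at +∞, and
w'(z)/h(z) → 0 as z → +∞.  Then w(z) → −∞ as z → +∞. -/
theorem stmt_10 (σ γ : ℝ) (hσ : 0 < σ)
    (h : ℝ → ℝ) (hnn : ∀ z, 0 ≤ h z)
    (hh : Filter.Tendsto h Filter.atTop Filter.atTop)
    (π : ℝ → ℝ) (hπcont : Continuous π) (hπanti : StrictAnti π)
    (hπbot : Filter.Tendsto π Filter.atBot Filter.atTop)
    (hπtop : Filter.Tendsto π Filter.atTop Filter.atBot)
    (w w' : ℝ → ℝ)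
    (hw : ∀ z, HasDerivAt w (w' z) z) (hw'cont : Continuous w')
    (hode : ∀ z : ℝ, σ^2 / 2 * w' z + π (w z) - h z = γ)
    (hratio : Filter.Tendsto (fun z => w' z / h z) Filter.atTop (nhds 0)) :
    Filter.Tendsto w Filter.atTop Filter.atBot :=
  stmt_10_general σ γ h hh π hπanti w w' hode hratio
end

section
/- Let w: (0,∞) → ℝ be twice continuously differentiable, tending to −∞ at +∞, and satisfy (σ²/2)w'(z) + π(w(z)) − h(z) = γ on (0,∞), where π is continuously differentiable with π' < 0 and h is continuously differentiable with h' > 0 on (0,∞) and h strictly increasing on (0,∞). Then w'(z) < 0 for all z > 0. -/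
/-!
Suppose `w' z₀ ≥ 0` for some `z₀ > 0`. Differentiating the equation gives
`(σ²/2) w'' = h' - π'(w) w'`, so `w'' > 0` wherever `w' = 0`; hence `w'` is strictly positive
somewhere at or to the right of `z₀`, say at `z₁`, and `w` climbs above `w z₁` just after `z₁`.
As `w → -∞`, `w` then has an interior maximum at some `z₂ > z₁` with `w z₂ > w z₁`. There
`w' z₂ = 0`, and since `π` is decreasing and `h` increasing,
`γ = π(w z₂) - h z₂ < π(w z₁) - h z₁ < (σ²/2) w' z₁ + π(w z₁) - h z₁ = γ`.
-/

open Filter Set Topology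

theorem eventually_nhdsGT_lt_of_hasDerivAt_pos {f : ℝ → ℝ} {f' x : ℝ} (hf : HasDerivAt f f' x)
    (hf' : 0 < f') : ∀ᶠ y in 𝓝[>] x, f x < f y := by
  have hslope := (hasDerivAt_iff_tendsto_slope.mp hf).eventually (eventually_gt_nhds hf')
  filter_upwards [nhdsGT_le_nhdsNE x hslope, self_mem_nhdsWithin] with y hy hxy
  exact (slope_pos_iff_of_le (le_of_lt hxy)).mp hy

theorem exists_isLocalMax_gt_of_tendsto_atBot {f : ℝ → ℝ} {a b : ℝ}
    (hf : ContinuousOn f (Ici a)) (hab : a < b) (hfab : f a < f b)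
    (hlim : Tendsto f atTop atBot) : ∃ c, a < c ∧ f a < f c ∧ IsLocalMax f c := by
  obtain ⟨d, hfd, hbd⟩ :=
    ((hlim.eventually (eventually_lt_atBot (f a))).and (eventually_gt_atTop b)).exists
  obtain ⟨c, ⟨hac, hcd⟩, hmax⟩ := isCompact_Icc.exists_isMaxOn (nonempty_Icc.mpr (by linarith))
    (hf.mono Icc_subset_Ici_self)
  have hfbc : f b ≤ f c := hmax ⟨hab.le, hbd.le⟩
  have hac : a < c := lt_of_le_of_ne hac (by rintro rfl; linarith)
  have hcd : c < d := lt_of_le_of_ne hcd (by rintro rfl; linarith)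
  exact ⟨c, hac, by linarith, hmax.isLocalMax (Icc_mem_nhds hac hcd)⟩

section ODE

variable {σ γ : ℝ} {π π' h h' w w' w'' : ℝ → ℝ}

theorem ode_second_deriv (hπ : ∀ x, HasDerivAt π (π' x) x)
    (hh : ∀ z, 0 < z → HasDerivAt h (h' z) z) (hw : ∀ z, 0 < z → HasDerivAt w (w' z) z)
    (hw' : ∀ z, 0 < z → HasDerivAt w' (w'' z) z)
    (hode : ∀ z, 0 < z → σ ^ 2 / 2 * w' z + π (w z) - h z = γ) {z : ℝ} (hz : 0 < z) :
    σ ^ 2 / 2 * w'' z = h' z - π' (w z) * w' z := by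
  have hrhs : HasDerivAt (fun t ↦ γ + (h t - π (w t))) (h' z - π' (w z) * w' z) z :=
    ((hh z hz).sub ((hπ (w z)).comp z (hw z hz))).const_add γ
  have heq : (fun t ↦ σ ^ 2 / 2 * w' t) =ᶠ[𝓝 z] fun t ↦ γ + (h t - π (w t)) := by
    filter_upwards [Ioi_mem_nhds hz] with t ht
    linarith [hode t ht]
  exact ((hw' z hz).const_mul _).unique (hrhs.congr_of_eventuallyEq heq)

theorem ode_exists_deriv_pos (hσ : 0 < σ) (hπ : ∀ x, HasDerivAt π (π' x) x)
    (hh : ∀ z, 0 < z → HasDerivAt h (h' z) z) (hh'pos : ∀ z, 0 < z → 0 < h' z)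
    (hw : ∀ z, 0 < z → HasDerivAt w (w' z) z) (hw' : ∀ z, 0 < z → HasDerivAt w' (w'' z) z)
    (hode : ∀ z, 0 < z → σ ^ 2 / 2 * w' z + π (w z) - h z = γ) {z₀ : ℝ} (hz₀ : 0 < z₀)
    (hw'z₀ : 0 ≤ w' z₀) : ∃ z₁, 0 < z₁ ∧ 0 < w' z₁ := by
  rcases hw'z₀.lt_or_eq with hpos | hzero
  · exact ⟨z₀, hz₀, hpos⟩
  have hw''pos : 0 < w'' z₀ := by
    have hid := ode_second_deriv hπ hh hw hw' hode hz₀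
    rw [← hzero, mul_zero, sub_zero] at hid
    exact pos_of_mul_pos_right (hid ▸ hh'pos z₀ hz₀) (by positivity)
  obtain ⟨z₁, hw'z₁, hz₀z₁⟩ :=
    ((eventually_nhdsGT_lt_of_hasDerivAt_pos (hw' z₀ hz₀) hw''pos).and
      self_mem_nhdsWithin).exists
  exact ⟨z₁, hz₀.trans hz₀z₁, hzero ▸ hw'z₁⟩

theorem ode_not_deriv_pos (hσ : 0 < σ) (hπ : ∀ x, HasDerivAt π (π' x) x)
    (hπ'neg : ∀ x, π' x < 0) (hhmono : StrictMonoOn h (Ioi 0))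
    (hw : ∀ z, 0 < z → HasDerivAt w (w' z) z) (hwbot : Tendsto w atTop atBot)
    (hode : ∀ z, 0 < z → σ ^ 2 / 2 * w' z + π (w z) - h z = γ) {z₁ : ℝ} (hz₁ : 0 < z₁) :
    ¬ 0 < w' z₁ := by
  intro hw'z₁
  obtain ⟨b, hwb, hz₁b⟩ :=
    ((eventually_nhdsGT_lt_of_hasDerivAt_pos (hw z₁ hz₁) hw'z₁).and self_mem_nhdsWithin).exists
  have hcont : ContinuousOn w (Ici z₁) := fun z hz ↦
    (hw z (hz₁.trans_le hz)).continuousAt.continuousWithinAt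
  obtain ⟨z₂, hz₁z₂, hwz₂, hmax⟩ := exists_isLocalMax_gt_of_tendsto_atBot hcont hz₁b hwb hwbot
  have hz₂ : 0 < z₂ := hz₁.trans hz₁z₂
  have hw'z₂ : w' z₂ = 0 := hmax.hasDerivAt_eq_zero (hw z₂ hz₂)
  have hπw : π (w z₂) < π (w z₁) := strictAnti_of_hasDerivAt_neg hπ hπ'neg hwz₂
  have hhz : h z₁ < h z₂ := hhmono hz₁ hz₂ hz₁z₂
  have hdrift : 0 < σ ^ 2 / 2 * w' z₁ := by positivity
  have hode₂ := hode z₂ hz₂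
  rw [hw'z₂, mul_zero, zero_add] at hode₂
  linarith [hode z₁ hz₁]

end ODE

theorem stmt_11_general (σ γ : ℝ) (hσ : 0 < σ)
    (π π' : ℝ → ℝ)
    (hπ : ∀ x : ℝ, HasDerivAt π (π' x) x)
    (hπ'neg : ∀ x : ℝ, π' x < 0)
    (h h' : ℝ → ℝ)
    (hh : ∀ z : ℝ, 0 < z → HasDerivAt h (h' z) z)
    (hh'pos : ∀ z : ℝ, 0 < z → 0 < h' z)
    (hhmono : StrictMonoOn h (Set.Ioi (0:ℝ)))
    (w w' w'' : ℝ → ℝ)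
    (hw : ∀ z : ℝ, 0 < z → HasDerivAt w (w' z) z)
    (hw' : ∀ z : ℝ, 0 < z → HasDerivAt w' (w'' z) z)
    (hwbot : Filter.Tendsto w Filter.atTop Filter.atBot)
    (hode : ∀ z : ℝ, 0 < z → σ^2 / 2 * w' z + π (w z) - h z = γ) :
    ∀ z : ℝ, 0 < z → w' z < 0 := by
  intro z hz
  by_contra! hw'z
  obtain ⟨z₁, hz₁, hw'z₁⟩ := ode_exists_deriv_pos hσ hπ hh hh'pos hw hw' hode hz hw'z
  exact ode_not_deriv_pos hσ hπ hπ'neg hhmono hw hwbot hode hz₁ hw'z₁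

/-- Let w be C² on (0,∞) with w(z) → −∞ as z → ∞, satisfying
(σ²/2)w'(z) + π(w(z)) − h(z) = γ on (0,∞), with π ∈ C¹, π' < 0, and h ∈ C¹ on (0,∞)
with h' > 0 (so h strictly increasing on (0,∞)).  Then w'(z) < 0 for all z > 0. -/
theorem stmt_11 (σ γ : ℝ) (hσ : 0 < σ)
    (π π' : ℝ → ℝ)
    (hπ : ∀ x : ℝ, HasDerivAt π (π' x) x) (hπ'cont : Continuous π')
    (hπ'neg : ∀ x : ℝ, π' x < 0)
    (h h' : ℝ → ℝ)
    (hh : ∀ z : ℝ, 0 < z → HasDerivAt h (h' z) z)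
    (hh'cont : ContinuousOn h' (Set.Ioi (0:ℝ)))
    (hh'pos : ∀ z : ℝ, 0 < z → 0 < h' z)
    (hhmono : StrictMonoOn h (Set.Ioi (0:ℝ)))
    (w w' w'' : ℝ → ℝ)
    (hw : ∀ z : ℝ, 0 < z → HasDerivAt w (w' z) z)
    (hw' : ∀ z : ℝ, 0 < z → HasDerivAt w' (w'' z) z)
    (hw''cont : ContinuousOn w'' (Set.Ioi (0:ℝ)))
    (hwbot : Filter.Tendsto w Filter.atTop Filter.atBot)
    (hode : ∀ z : ℝ, 0 < z → σ^2 / 2 * w' z + π (w z) - h z = γ) :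
    ∀ z : ℝ, 0 < z → w' z < 0 :=
  stmt_11_general σ γ hσ π π' hπ hπ'neg h h' hh hh'pos hhmono w w' w'' hw hw' hwbot hode
end
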